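/- Let α₀ > 0 be rational. Then: (a) the left difference quotient of Δ at α₀ tends to zero, i.e., (Δ(α₀) − Δ(α))/(α₀ − α) → 0 as α → α₀ from the left; (b) if β₊ denotes the right limit of Δ at α₀ (i.e., Δ(x) → β₊ as x → α₀ from the right), then (Δ(α) − β₊)/(α − α₀) → 0 as α → α₀ from the right. -/

import Mathlib

open Filter

/-- The digit sequence `u_α`: with `b = ⌈α⌉`, `u_α n = (b−1) + ⌈(α−b+1)(n+1)⌉ − ⌈(α−b+1)n⌉`,
the upper mechanical word of slope `α − b + 1` written over the alphabet `{b−1, b}`. -/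
noncomputable def upperWord (α : ℝ) (n : ℕ) : ℤ :=
  (⌈α⌉ - 1) + (⌈(α - ⌈α⌉ + 1) * ((n : ℝ) + 1)⌉ - ⌈(α - ⌈α⌉ + 1) * (n : ℝ)⌉)

/-- `Δ` is the devil's staircase function: `Δ 0 = 1` and, for each `α > 0`, `Δ α` is the
unique real `β > 1` satisfying `∑_{n=0}^∞ u_α(n)·β^{−(n+1)} = 1`. -/
def IsDevilStaircase (Δ : ℝ → ℝ) : Prop :=
  Δ 0 = 1 ∧ ∀ α : ℝ, 0 < α →
    (1 < Δ α ∧ ∑' n : ℕ, (upperWord α n : ℝ) / (Δ α) ^ (n + 1) = 1) ∧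
    ∀ β : ℝ, 1 < β → (∑' n : ℕ, (upperWord α n : ℝ) / β ^ (n + 1) = 1) → β = Δ α

/-!
Write `α₀ = p / q` and `x = 1 / β`, so that `Δ α` is the reciprocal of the root in `(0, 1)` of
the power series `∑ u_α(n) x^(n+1) = 1`, whose digits are bounded, nonnegative and start with
`⌈α⌉ ≥ 1`. Two such roots whose digit sequences share a prefix of length `N` differ by
`O(r ^ N)` with `r < 1` uniform on a window of slopes. Since `u_α(n) = ⌈α(n+1)⌉ - ⌈αn⌉` and the
ceiling is constant on the cells `(j/q, (j+1)/q]`, the word of any `α ∈ (α₀ - ε, α₀]` agrees with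
that of `α₀`, and any two words of slopes in `(α₀, α₀ + ε)` agree with each other, on a prefix of
length `≈ 1 / (q ε)`. So the one-sided variations of `Δ` are exponentially small in `1 / ε`,
hence `o(ε)`; on the right one first lets the second slope tend to `α₀`, replacing its `Δ` by
`β₊`.
-/

open Finset Topology

section DigitSeries

variable {u v : ℕ → ℝ} {M x y r : ℝ}

lemma summable_mul_pow_succ (hu : ∀ n, u n ∈ Set.Icc 0 M) (hx0 : 0 ≤ x) (hx1 : x < 1) :
    Summable fun n => u n * x ^ (n + 1) := by
  refine Summable.of_nonneg_of_le (fun n => mul_nonneg (hu n).1 (by positivity)) (fun n => ?_)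
    ((summable_geometric_of_lt_one hx0 hx1).mul_left (M * x))
  calc u n * x ^ (n + 1) ≤ M * x ^ (n + 1) := by gcongr; exact (hu n).2
    _ = M * x * x ^ n := by ring

lemma abs_tsum_mul_pow_succ_sub_le (hu : ∀ n, u n ∈ Set.Icc 0 M) (hv : ∀ n, v n ∈ Set.Icc 0 M)
    {N : ℕ} (hagree : ∀ n < N, u n = v n) (hx0 : 0 ≤ x) (hx1 : x < 1) :
    |∑' n, u n * x ^ (n + 1) - ∑' n, v n * x ^ (n + 1)| ≤ M * x ^ (N + 1) / (1 - x) := by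
  have hs : Summable fun n => (u n - v n) * x ^ (n + 1) := by
    simpa only [sub_mul] using
      (summable_mul_pow_succ hu hx0 hx1).sub (summable_mul_pow_succ hv hx0 hx1)
  have hhead : ∑ n ∈ range N, (u n - v n) * x ^ (n + 1) = 0 :=
    sum_eq_zero fun n hn => by rw [hagree n (mem_range.1 hn), sub_self, zero_mul]
  have hgeom : HasSum (fun n => M * x ^ (N + 1) * x ^ n) (M * x ^ (N + 1) / (1 - x)) :=
    (hasSum_geometric_of_lt_one hx0 hx1).mul_left _
  rw [← (summable_mul_pow_succ hu hx0 hx1).tsum_sub (summable_mul_pow_succ hv hx0 hx1)]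
  simp_rw [← sub_mul]
  rw [← hs.sum_add_tsum_nat_add N, hhead, zero_add, ← Real.norm_eq_abs]
  refine tsum_of_norm_bounded hgeom fun n => ?_
  rw [Real.norm_eq_abs, abs_mul, abs_of_nonneg (by positivity : (0 : ℝ) ≤ x ^ (n + N + 1))]
  calc |u (n + N) - v (n + N)| * x ^ (n + N + 1) ≤ M * x ^ (n + N + 1) := by
        gcongr
        exact abs_sub_le_of_nonneg_of_le (hu _).1 (hu _).2 (hv _).1 (hv _).2
    _ = M * x ^ (N + 1) * x ^ n := by ring

lemma mul_sub_le_tsum_mul_pow_succ_sub (hu : ∀ n, u n ∈ Set.Icc 0 M) (hy0 : 0 ≤ y)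
    (hyx : y ≤ x) (hx1 : x < 1) :
    u 0 * (x - y) ≤ ∑' n, u n * x ^ (n + 1) - ∑' n, u n * y ^ (n + 1) := by
  have hsx := summable_mul_pow_succ hu (hy0.trans hyx) hx1
  have hsy := summable_mul_pow_succ hu hy0 (hyx.trans_lt hx1)
  rw [← hsx.tsum_sub hsy]
  have hterm : ∀ n, 0 ≤ u n * x ^ (n + 1) - u n * y ^ (n + 1) := fun n =>
    sub_nonneg.2 (mul_le_mul_of_nonneg_left (pow_le_pow_left₀ hy0 hyx _) (hu n).1)
  simpa [mul_sub] using (hsx.sub hsy).le_tsum 0 fun n _ => hterm n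

lemma abs_sub_le_of_tsum_mul_pow_succ_eq_one (hu : ∀ n, u n ∈ Set.Icc 0 M)
    (hv : ∀ n, v n ∈ Set.Icc 0 M) (hu0 : 1 ≤ u 0) (hv0 : 1 ≤ v 0) {N : ℕ}
    (hagree : ∀ n < N, u n = v n) (hx0 : 0 ≤ x) (hxr : x ≤ r) (hy0 : 0 ≤ y) (hyr : y ≤ r)
    (hr1 : r < 1) (hux : ∑' n, u n * x ^ (n + 1) = 1) (hvy : ∑' n, v n * y ^ (n + 1) = 1) :
    |x - y| ≤ M * r ^ (N + 1) / (1 - r) := by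
  wlog hyx : y ≤ x generalizing u v x y
  · rw [abs_sub_comm]
    exact this hv hu hv0 hu0 (fun n hn => (hagree n hn).symm) hy0 hyr hx0 hxr hvy hux
      (le_of_not_ge hyx)
  have hM : 0 ≤ M := (hu 0).1.trans (hu 0).2
  calc |x - y| = x - y := abs_of_nonneg (sub_nonneg.2 hyx)
    _ ≤ u 0 * (x - y) := le_mul_of_one_le_left (sub_nonneg.2 hyx) hu0
    _ ≤ ∑' n, u n * x ^ (n + 1) - ∑' n, u n * y ^ (n + 1) :=
      mul_sub_le_tsum_mul_pow_succ_sub hu hy0 hyx (hxr.trans_lt hr1)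
    _ = -(∑' n, u n * y ^ (n + 1) - ∑' n, v n * y ^ (n + 1)) := by rw [hux, hvy]; ring
    _ ≤ M * y ^ (N + 1) / (1 - y) :=
      (neg_le_abs _).trans (abs_tsum_mul_pow_succ_sub_le hu hv hagree hy0 (hyr.trans_lt hr1))
    _ ≤ M * r ^ (N + 1) / (1 - r) := by
      have hr0 : 0 ≤ r := hx0.trans hxr
      gcongr

lemma pow_mul_sum_range_le_one (hu : ∀ n, u n ∈ Set.Icc 0 M) (hx0 : 0 ≤ x) (hx1 : x < 1)
    (hux : ∑' n, u n * x ^ (n + 1) = 1) (K : ℕ) : x ^ K * ∑ n ∈ range K, u n ≤ 1 := by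
  rw [mul_sum, ← hux]
  calc ∑ n ∈ range K, x ^ K * u n ≤ ∑ n ∈ range K, u n * x ^ (n + 1) :=
        sum_le_sum fun n hn => by
          rw [mul_comm]
          exact mul_le_mul_of_nonneg_left (pow_le_pow_of_le_one hx0 hx1.le (mem_range.1 hn))
            (hu n).1
    _ ≤ ∑' n, u n * x ^ (n + 1) :=
      (summable_mul_pow_succ hu hx0 hx1).sum_le_tsum _ fun n _ =>
        mul_nonneg (hu n).1 (by positivity)

lemma inv_add_one_le_of_tsum_mul_pow_succ_eq_one (hu : ∀ n, u n ∈ Set.Icc 0 M) (hx0 : 0 ≤ x)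
    (hx1 : x < 1) (hux : ∑' n, u n * x ^ (n + 1) = 1) : (M + 1)⁻¹ ≤ x := by
  have hM : 0 ≤ M := (hu 0).1.trans (hu 0).2
  have h := abs_tsum_mul_pow_succ_sub_le (v := 0) (N := 0) hu (fun _ => ⟨le_rfl, hM⟩)
    (by simp) hx0 hx1
  simp only [hux, Pi.zero_apply, zero_mul, tsum_zero, sub_zero, abs_one, zero_add, pow_one] at h
  rw [le_div_iff₀ (by linarith)] at h
  rw [inv_le_iff_one_le_mul₀ (by linarith)]
  linarith

end DigitSeries

section UpperWord

variable {α α' α₀ : ℝ}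

/-- The shift by `⌈α⌉ - 1` in the definition only moves the ceilings by integers. -/
lemma upperWord_eq (α : ℝ) (n : ℕ) : upperWord α n = ⌈α * (n + 1)⌉ - ⌈α * n⌉ := by
  have key : ∀ m : ℝ, ∀ k : ℤ, m = k →
      ⌈(α - ⌈α⌉ + 1) * m⌉ = ⌈α * m⌉ - (⌈α⌉ - 1) * k := fun m k hm => by
    rw [← Int.ceil_sub_intCast]; push_cast; rw [hm]; ring_nf
  rw [upperWord, key _ (n + 1) (by push_cast; ring), key _ (n : ℤ) (by simp)]
  ring

lemma one_le_upperWord_zero (hα : 0 < α) : 1 ≤ upperWord α 0 := by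
  simpa [upperWord_eq] using Int.one_le_ceil_iff.2 hα

lemma upperWord_nonneg (hα : 0 ≤ α) (n : ℕ) : 0 ≤ upperWord α n := by
  rw [upperWord_eq, sub_nonneg]
  exact Int.ceil_le_ceil (by gcongr; linarith)

lemma upperWord_le_ceil (α : ℝ) (n : ℕ) : upperWord α n ≤ ⌈α⌉ := by
  rw [upperWord_eq, sub_le_iff_le_add, mul_add, mul_one, add_comm ⌈α⌉]
  exact Int.ceil_add_le _ _

lemma sum_range_upperWord (α : ℝ) (K : ℕ) : ∑ n ∈ range K, upperWord α n = ⌈α * K⌉ := by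
  simpa [upperWord_eq] using sum_range_sub (fun m : ℕ => ⌈α * m⌉) K

lemma upperWord_eq_of_ceil_mul_eq {N : ℕ} (h : ∀ m ≤ N, ⌈α * m⌉ = ⌈α' * m⌉) :
    ∀ n < N, upperWord α n = upperWord α' n := fun n hn => by
  have h1 := h (n + 1) hn
  push_cast at h1
  rw [upperWord_eq, upperWord_eq, h1, h n hn.le]

lemma upperWord_mem_Icc {b : ℝ} (hα : 0 < α) (hαb : α ≤ b) (n : ℕ) :
    (upperWord α n : ℝ) ∈ Set.Icc 0 (⌈b⌉ : ℝ) :=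
  ⟨by exact_mod_cast upperWord_nonneg hα.le n,
    by exact_mod_cast (upperWord_le_ceil α n).trans (Int.ceil_le_ceil hαb)⟩

lemma ceil_eq_ceil_of_mem_Ioc_div {q : ℕ} (hq : 0 < q) {j : ℤ} {y : ℝ}
    (hy : y ∈ Set.Ioc ((j : ℝ) / q) ((j + 1) / q)) : ⌈y⌉ = ⌈((j : ℝ) + 1) / q⌉ := by
  have hq' : (0 : ℝ) < q := by exact_mod_cast hq
  refine le_antisymm (Int.ceil_le_ceil hy.2) (Int.ceil_le.2 ?_)
  have hj : (j : ℝ) < ⌈y⌉ * q := (div_lt_iff₀ hq').1 (hy.1.trans_le (Int.le_ceil y))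
  have hj' : j + 1 ≤ ⌈y⌉ * q := by exact_mod_cast hj
  rw [div_le_iff₀ hq']
  exact_mod_cast hj'

lemma upperWord_eq_of_le {p : ℤ} {q : ℕ} (hq : 0 < q) (hα₀ : α₀ = p / q) (hα : α ≤ α₀)
    {N : ℕ} (hN : N * (α₀ - α) < 1 / q) : ∀ n < N, upperWord α n = upperWord α₀ n := by
  refine upperWord_eq_of_ceil_mul_eq fun m hm => ?_
  have hm' : (m : ℝ) * (α₀ - α) < 1 / q := lt_of_le_of_lt (by gcongr) hN
  have hj : (((p * m - 1 : ℤ) : ℝ) + 1) / q = α₀ * m := by rw [hα₀]; push_cast; ring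
  have hj' : ((p * m - 1 : ℤ) : ℝ) / q = α₀ * m - 1 / q := by rw [hα₀]; push_cast; ring
  rw [← hj]
  refine ceil_eq_ceil_of_mem_Ioc_div hq ⟨?_, ?_⟩
  · rw [hj']
    linarith
  · rw [hj]
    exact mul_le_mul_of_nonneg_right hα m.cast_nonneg

lemma upperWord_eq_of_lt_of_le {p : ℤ} {q : ℕ} (hq : 0 < q) (hα₀ : α₀ = p / q) (hα' : α₀ < α')
    (hα : α' ≤ α) {N : ℕ} (hN : N * (α - α₀) < 1 / q) :
    ∀ n < N, upperWord α' n = upperWord α n := by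
  refine upperWord_eq_of_ceil_mul_eq fun m hm => ?_
  rcases m.eq_zero_or_pos with rfl | hm0
  · simp
  have hm0' : (0 : ℝ) < m := by exact_mod_cast hm0
  have hm' : (m : ℝ) * (α - α₀) < 1 / q :=
    lt_of_le_of_lt (by gcongr; linarith) hN
  have hj : ((p * m : ℤ) : ℝ) / q = α₀ * m := by rw [hα₀]; push_cast; ring
  have hj' : (((p * m : ℤ) : ℝ) + 1) / q = α₀ * m + 1 / q := by rw [hα₀]; push_cast; ring
  have hmem : ∀ z, α₀ < z → z ≤ α →
      z * m ∈ Set.Ioc (((p * m : ℤ) : ℝ) / q) ((((p * m : ℤ) : ℝ) + 1) / q) := by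
    intro z hz hzα
    rw [hj, hj']
    constructor
    · exact mul_lt_mul_of_pos_right hz hm0'
    · nlinarith
  rw [ceil_eq_ceil_of_mem_Ioc_div hq (hmem α' hα' hα),
    ceil_eq_ceil_of_mem_Ioc_div hq (hmem α (hα'.trans_le hα) le_rfl)]

end UpperWord

namespace IsDevilStaircase

variable {Δ : ℝ → ℝ} {α a : ℝ}

lemma one_lt (hΔ : IsDevilStaircase Δ) (hα : 0 < α) : 1 < Δ α :=
  (hΔ.2 α hα).1.1

lemma pos (hΔ : IsDevilStaircase Δ) (hα : 0 < α) : 0 < Δ α :=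
  zero_lt_one.trans (hΔ.one_lt hα)

lemma tsum_upperWord_mul_inv_pow_succ (hΔ : IsDevilStaircase Δ) (hα : 0 < α) :
    ∑' n, (upperWord α n : ℝ) * (Δ α)⁻¹ ^ (n + 1) = 1 := by
  simpa only [div_eq_mul_inv, inv_pow] using (hΔ.2 α hα).1.2

lemma inv_lt_one (hΔ : IsDevilStaircase Δ) (hα : 0 < α) : (Δ α)⁻¹ < 1 :=
  inv_lt_one_of_one_lt₀ (hΔ.one_lt hα)

lemma inv_pow_le_half (hΔ : IsDevilStaircase Δ) (hα : 0 < α) {K : ℕ} (hK : 2 ≤ α * K) :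
    (Δ α)⁻¹ ^ K ≤ 1 / 2 := by
  have hx0 : 0 ≤ (Δ α)⁻¹ := inv_nonneg.2 (hΔ.pos hα).le
  have h := pow_mul_sum_range_le_one (upperWord_mem_Icc hα le_rfl) hx0 (hΔ.inv_lt_one hα)
    (hΔ.tsum_upperWord_mul_inv_pow_succ hα) K
  have hsum : (2 : ℝ) ≤ ∑ n ∈ range K, (upperWord α n : ℝ) := by
    rw [← Int.cast_sum, sum_range_upperWord]
    exact hK.trans (Int.le_ceil _)
  nlinarith [pow_nonneg hx0 K]

lemma inv_mem_Icc (hΔ : IsDevilStaircase Δ) {b : ℝ} (hα : α ∈ Set.Icc a b) (ha : 0 < a) {K : ℕ}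
    (hK : 2 / a ≤ K) : (Δ α)⁻¹ ∈ Set.Icc ((⌈b⌉ : ℝ) + 1)⁻¹ ((1 / 2) ^ (K : ℝ)⁻¹) := by
  have hα0 : 0 < α := ha.trans_le hα.1
  have hx0 : 0 ≤ (Δ α)⁻¹ := inv_nonneg.2 (hΔ.pos hα0).le
  have hK0 : K ≠ 0 := Nat.cast_ne_zero.1 ((div_pos two_pos ha).trans_le hK).ne'
  have hαK : 2 ≤ α * K := by
    rw [div_le_iff₀ ha] at hK
    nlinarith [hα.1]
  refine ⟨inv_add_one_le_of_tsum_mul_pow_succ_eq_one (upperWord_mem_Icc hα0 hα.2) hx0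
    (hΔ.inv_lt_one hα0) (hΔ.tsum_upperWord_mul_inv_pow_succ hα0), ?_⟩
  rw [← pow_le_pow_iff_left₀ hx0 (by positivity) hK0, Real.rpow_inv_natCast_pow (by norm_num) hK0]
  exact hΔ.inv_pow_le_half hα0 hαK

lemma exists_abs_sub_le_pow (hΔ : IsDevilStaircase Δ) (ha : 0 < a) (b : ℝ) :
    ∃ C r : ℝ, 0 ≤ r ∧ r < 1 ∧ ∀ α ∈ Set.Icc a b, ∀ α' ∈ Set.Icc a b, ∀ N : ℕ,
      (∀ n < N, upperWord α n = upperWord α' n) → |Δ α - Δ α'| ≤ C * r ^ N := by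
  obtain ⟨K, hK⟩ := exists_nat_ge (2 / a)
  have hK0 : (0 : ℝ) < K := (div_pos two_pos ha).trans_le hK
  set r : ℝ := (1 / 2) ^ (K : ℝ)⁻¹
  set M : ℝ := (⌈b⌉ : ℝ)
  have hr1 : r < 1 := Real.rpow_lt_one (by norm_num) (by norm_num) (inv_pos.2 hK0)
  refine ⟨(M + 1) ^ 2 * (M * r / (1 - r)), r, by positivity, hr1,
    fun α hα α' hα' N hagree => ?_⟩
  have hα0 : 0 < α := ha.trans_le hα.1
  have hα'0 : 0 < α' := ha.trans_le hα'.1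
  obtain ⟨hxl, hxr⟩ := hΔ.inv_mem_Icc hα ha hK
  obtain ⟨hyl, hyr⟩ := hΔ.inv_mem_Icc hα' ha hK
  have hM : 0 ≤ M := Int.cast_nonneg
    (zero_le_one.trans ((Int.one_le_ceil_iff.2 hα0).trans (Int.ceil_le_ceil hα.2)))
  have hxM : Δ α ≤ M + 1 := (inv_le_inv₀ (by linarith) (hΔ.pos hα0)).1 hxl
  have hyM : Δ α' ≤ M + 1 := (inv_le_inv₀ (by linarith) (hΔ.pos hα'0)).1 hyl
  have hclose := abs_sub_le_of_tsum_mul_pow_succ_eq_one (upperWord_mem_Icc hα0 hα.2)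
    (upperWord_mem_Icc hα'0 hα'.2)
    (by exact_mod_cast one_le_upperWord_zero hα0) (by exact_mod_cast one_le_upperWord_zero hα'0)
    (fun n hn => by exact_mod_cast hagree n hn) (inv_nonneg.2 (hΔ.pos hα0).le) hxr
    (inv_nonneg.2 (hΔ.pos hα'0).le) hyr hr1 (hΔ.tsum_upperWord_mul_inv_pow_succ hα0)
    (hΔ.tsum_upperWord_mul_inv_pow_succ hα'0)
  have hx := hΔ.pos hα0
  have hy := hΔ.pos hα'0
  calc |Δ α - Δ α'| = Δ α * Δ α' * |(Δ α)⁻¹ - (Δ α')⁻¹| := by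
        rw [← abs_of_pos (by positivity : 0 < Δ α * Δ α'), ← abs_mul, abs_sub_comm]
        congr 1
        field_simp
    _ ≤ (M + 1) * (M + 1) * (M * r ^ (N + 1) / (1 - r)) := by gcongr
    _ = (M + 1) ^ 2 * (M * r / (1 - r)) * r ^ N := by ring

end IsDevilStaircase

lemma tendsto_const_sub_nhdsLT (a : ℝ) : Tendsto (fun x => a - x) (𝓝[<] a) (𝓝[>] 0) := by
  refine tendsto_nhdsWithin_iff.2
    ⟨?_, eventually_nhdsWithin_of_forall fun _ hx => Set.mem_Ioi.2 (sub_pos.2 hx)⟩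
  simpa using ((continuous_sub_left a).tendsto a).mono_left nhdsWithin_le_nhds

lemma tendsto_sub_const_nhdsGT (a : ℝ) : Tendsto (fun x => x - a) (𝓝[>] a) (𝓝[>] 0) := by
  refine tendsto_nhdsWithin_iff.2
    ⟨?_, eventually_nhdsWithin_of_forall fun _ hx => Set.mem_Ioi.2 (sub_pos.2 hx)⟩
  simpa using ((continuous_sub_right a).tendsto a).mono_left nhdsWithin_le_nhds

/-- Take `N ≈ c / (2 ε)`: then `r ^ N / ε` is at most a multiple of `(N + 1) r ^ N`. -/
lemma tendsto_div_of_abs_le_pow {ι : Type*} {l : Filter ι} {f ε : ι → ℝ} {C r c : ℝ}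
    (hr0 : 0 ≤ r) (hr1 : r < 1) (hc : 0 < c) (hε : Tendsto ε l (𝓝[>] 0))
    (hf : ∀ᶠ i in l, ∀ N : ℕ, N * ε i < c → |f i| ≤ C * r ^ N) :
    Tendsto (fun i => f i / ε i) l (𝓝 0) := by
  set N : ι → ℕ := fun i => ⌊c / 2 * (ε i)⁻¹⌋₊
  have hN : Tendsto N l atTop := tendsto_nat_floor_atTop.comp
    ((tendsto_inv_nhdsGT_zero.comp hε).const_mul_atTop (half_pos hc))
  have hg : Tendsto (fun n : ℕ => 2 / c * C * (n * r ^ n + r ^ n)) atTop (𝓝 0) := by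
    simpa using ((tendsto_self_mul_const_pow_of_lt_one hr0 hr1).add
      (tendsto_pow_atTop_nhds_zero_of_lt_one hr0 hr1)).const_mul (2 / c * C)
  refine squeeze_zero_norm' ?_ (hg.comp hN)
  filter_upwards [hf, hε.eventually self_mem_nhdsWithin] with i hfi (hεi : 0 < ε i)
  have hfloor : (N i : ℝ) ≤ c / 2 * (ε i)⁻¹ := Nat.floor_le (by positivity)
  have hceil : c / 2 * (ε i)⁻¹ < N i + 1 := Nat.lt_floor_add_one _
  have hNε : (N i : ℝ) * ε i < c := by
    calc (N i : ℝ) * ε i ≤ c / 2 * (ε i)⁻¹ * ε i := by gcongr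
      _ = c / 2 := by field_simp
      _ < c := half_lt_self hc
  have hfN := hfi (N i) hNε
  have hinv : (ε i)⁻¹ ≤ 2 / c * (N i + 1) :=
    calc (ε i)⁻¹ = 2 / c * (c / 2 * (ε i)⁻¹) := by field_simp
      _ ≤ 2 / c * (N i + 1) := by gcongr
  rw [Real.norm_eq_abs, abs_div, abs_of_pos hεi, div_eq_mul_inv]
  calc |f i| * (ε i)⁻¹ ≤ C * r ^ N i * (2 / c * (N i + 1)) :=
        mul_le_mul hfN hinv (by positivity) ((abs_nonneg _).trans hfN)
    _ = 2 / c * C * (N i * r ^ N i + r ^ N i) := by ring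

/-- At a positive rational `α₀`: (a) the left difference quotient of `Δ` tends to 0;
(b) if `β₊` is the right limit of `Δ` at `α₀`, the right difference quotient formed with
`β₊` tends to 0. -/
theorem devilStaircase_one_sided_derivatives_at_rational (Δ : ℝ → ℝ)
    (hΔ : IsDevilStaircase Δ) (α₀ : ℝ) (h0 : 0 < α₀) (hrat : ∃ r : ℚ, (r : ℝ) = α₀) :
    Tendsto (fun α : ℝ => (Δ α₀ - Δ α) / (α₀ - α))
      (nhdsWithin α₀ (Set.Iio α₀)) (nhds 0) ∧
    (∀ βp : ℝ, Tendsto Δ (nhdsWithin α₀ (Set.Ioi α₀)) (nhds βp) →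
      Tendsto (fun α : ℝ => (Δ α - βp) / (α - α₀))
        (nhdsWithin α₀ (Set.Ioi α₀)) (nhds 0)) := by
  obtain ⟨s, hs⟩ := hrat
  have hα₀ : α₀ = s.num / s.den := by rw [← hs, Rat.cast_def]
  have hq : (0 : ℝ) < 1 / s.den := by positivity
  obtain ⟨C, r, hr0, hr1, hest⟩ := hΔ.exists_abs_sub_le_pow (half_pos h0) (α₀ + 1)
  refine ⟨tendsto_div_of_abs_le_pow (C := C) hr0 hr1 hq (tendsto_const_sub_nhdsLT α₀) ?_,
    fun βp hβp => tendsto_div_of_abs_le_pow (C := C) hr0 hr1 hq (tendsto_sub_const_nhdsGT α₀) ?_⟩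
  · filter_upwards [Ioo_mem_nhdsLT (half_lt_self h0)] with α hα N hN
    exact hest _ ⟨by linarith, by linarith⟩ _ ⟨hα.1.le, by linarith [hα.2]⟩ N
      (fun n hn => (upperWord_eq_of_le s.pos hα₀ hα.2.le hN n hn).symm)
  · filter_upwards [Ioo_mem_nhdsGT (lt_add_one α₀)] with α hα N hN
    refine le_of_tendsto ((tendsto_const_nhds.sub hβp).abs) ?_
    filter_upwards [Ioo_mem_nhdsGT hα.1] with α' hα'
    exact hest _ ⟨by linarith [hα.1], hα.2.le⟩ _ ⟨by linarith [hα'.1], by linarith [hα'.2, hα.2]⟩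
      N (fun n hn => (upperWord_eq_of_lt_of_le s.pos hα₀ hα'.1 hα'.2.le hN n hn).symm)
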